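/- arXiv:2507.06851 — 3 statements merged into one kernel-verified Lean document; each statement's English description precedes it below -/
import Mathlib

section
/- Let (ι, 𝔩, G) be a one-object symmetric set, (V_l)_{l∈L} a Banach space assignment, (T, ⊗) a G-symmetric tensor product of V over (ι, 𝔩, G), (Ω, 𝓕, P) a probability space, X a real Banach space, and p ∈ [1, ∞). Suppose f : Ω × V^{×ι} → X is such that f(ω, ·) is a G-symmetric continuous multilinear map for each ω ∈ Ω, that for each v ∈ V^{×ι} the map ω ↦ f(ω, v) is strongly measurable with ∫ ‖f(ω,v)‖_X^p dP(ω) < ∞, and that the resulting multilinear map V^{×ι} → L^p(Ω; X), v ↦ [f(·, v)], is continuous. For each ω let f̃(ω, ·) : T → X be the unique continuous linear map with f̃(ω, ·) ∘ ⊗ = f(ω, ·), and let g : T → L^p(Ω; X) be the unique continuous linear map with g ∘ ⊗ = (v ↦ [f(·, v)]) provided by the universal property. Then for every u ∈ T the map ω ↦ f̃(ω, u) is P-almost surely equal to (a representative of) g(u); in particular ω ↦ f̃(ω, u) is p-integrable and u ↦ [f̃(·, u)] is a continuous linear map T → L^p(Ω; X) factoring the family (v ↦ [f(·, v)]) through ⊗.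 -/
/-!
The elements `u` of `T` for which `ω ↦ f̃(ω, u)` agrees a.e. with `g u` form a linear subspace,
and it is closed: an `L^p`-convergent sequence has an a.e. convergent subsequence, and each
`f̃(ω, ·)` is continuous. It contains every `⊗ v`, since both sides are `f(·, v)` there. Finally
the `⊗ v` span a dense subspace of `T`: a real functional vanishing on them factors the zero
map, so it is zero by uniqueness in the universal property, and Hahn–Banach applied in the
quotient of `T` by the closure of their span shows that this closure is everything.
-/

open scoped BigOperators

namespace SymTensor

universe u v

/-- A permutation of the index set preserves the labels. -/
def LabPres {ι L : Type} (lab : ι → L) (σ : Equiv.Perm ι) : Prop :=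
  ∀ i, lab (σ i) = lab i

/-- The action `(σ · v) i = v (σ⁻¹ i)` of a label-preserving permutation on
`V^{×ι} = ∏ i, V (lab i)`. -/
def permAct {ι L : Type} (lab : ι → L) (V : L → Type u) (σ : Equiv.Perm ι)
    (hσ : LabPres lab σ) (v : ∀ i, V (lab i)) : ∀ i, V (lab i) := fun i =>
  cast (congrArg V ((hσ (σ.symm i)).symm.trans (congrArg lab (σ.apply_symm_apply i))))
    (v (σ.symm i))

/-- A `G`-symmetric function on `V^{×ι}`. -/
def IsSymFun {ι L : Type} (lab : ι → L) (V : L → Type u) {Z : Type v}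
    (G : Subgroup (Equiv.Perm ι)) (f : (∀ i, V (lab i)) → Z) : Prop :=
  ∀ σ ∈ G, ∀ hσ : LabPres lab σ, ∀ v, f (permAct lab V σ hσ v) = f v

variable {ι : Type} [Fintype ι] {L : Type}

/-- Candidate data for a symmetric tensor product: a Banach space `T` together with a
continuous multilinear map `⊗ : V^{×ι} → T`. -/
structure SymTPCandidate (lab : ι → L) (V : L → Type u)
    [∀ l, NormedAddCommGroup (V l)] [∀ l, NormedSpace ℝ (V l)] : Type (u + 1) where
  T : Type u
  [instN : NormedAddCommGroup T]
  [instS : NormedSpace ℝ T]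
  [instC : CompleteSpace T]
  tp : ContinuousMultilinearMap ℝ (fun i => V (lab i)) T

attribute [instance] SymTPCandidate.instN SymTPCandidate.instS SymTPCandidate.instC

/-- `(T, ⊗)` is a `G`-symmetric tensor product of the Banach space assignment `V` over
the one-object symmetric set `(ι, lab, G)`: `⊗` is a `G`-symmetric continuous
multilinear map of norm at most `1`, and every `G`-symmetric continuous multilinear map
into a complete locally convex topological vector space `Z` factors uniquely and
continuously through it, with equality of norms when `Z` is a Banach space. -/
structure IsSymTensorProduct (lab : ι → L) (V : L → Type u)
    [∀ l, NormedAddCommGroup (V l)] [∀ l, NormedSpace ℝ (V l)] [∀ l, CompleteSpace (V l)]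
    (G : Subgroup (Equiv.Perm ι)) (P : SymTPCandidate lab V) : Prop where
  norm_tp : ‖P.tp‖ ≤ 1
  symm_tp : IsSymFun lab V G ⇑P.tp
  lift :
    ∀ (Z : Type v) [AddCommGroup Z] [UniformSpace Z] [IsUniformAddGroup Z] [Module ℝ Z]
      [ContinuousSMul ℝ Z] [LocallyConvexSpace ℝ Z] [CompleteSpace Z]
      (f : ContinuousMultilinearMap ℝ (fun i => V (lab i)) Z),
      IsSymFun lab V G ⇑f → ∃! F : P.T →L[ℝ] Z, ∀ v, F (P.tp v) = f v
  lift_norm :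
    ∀ (Z : Type v) [NormedAddCommGroup Z] [NormedSpace ℝ Z] [CompleteSpace Z]
      (f : ContinuousMultilinearMap ℝ (fun i => V (lab i)) Z),
      IsSymFun lab V G ⇑f → ∀ F : P.T →L[ℝ] Z, (∀ v, F (P.tp v) = f v) → ‖F‖ = ‖f‖

open MeasureTheory
open scoped ENNReal

section TensorProduct

variable {lab : ι → L} {V : L → Type u} [∀ l, NormedAddCommGroup (V l)]
  [∀ l, NormedSpace ℝ (V l)] [∀ l, CompleteSpace (V l)] {G : Subgroup (Equiv.Perm ι)}
  {P : SymTPCandidate lab V}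

theorem IsSymTensorProduct.eq_zero_of_forall_apply_tp_eq_zero
    (hP : IsSymTensorProduct.{u, v} lab V G P) (φ : StrongDual ℝ P.T)
    (hφ : ∀ v, φ (P.tp v) = 0) : φ = 0 := by
  -- the universal property only speaks about targets in `Type v`
  let e : ULift.{v} ℝ ≃L[ℝ] ℝ := ContinuousLinearEquiv.ulift
  have hsymm : IsSymFun lab V G
      ⇑(0 : ContinuousMultilinearMap ℝ (fun i => V (lab i)) (ULift.{v} ℝ)) :=
    fun _ _ _ _ => rfl
  have hlift : (e.symm : ℝ →L[ℝ] ULift.{v} ℝ).comp φ = 0 :=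
    (hP.lift _ 0 hsymm).unique (fun v => by simp [hφ]) (fun _ => rfl)
  ext x
  simpa using congrArg e (congr($hlift x))

theorem IsSymTensorProduct.dense_span_range_tp (hP : IsSymTensorProduct.{u, v} lab V G P) :
    Dense (Submodule.span ℝ (Set.range P.tp) : Set P.T) := by
  set M := (Submodule.span ℝ (Set.range P.tp)).topologicalClosure
  have : IsClosed (M : Set P.T) := Submodule.isClosed_topologicalClosure _
  refine Submodule.dense_iff_topologicalClosure_eq_top.2 <| Submodule.eq_top_iff'.2 fun x =>
    (Submodule.Quotient.mk_eq_zero M).1 <|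
      SeparatingDual.eq_zero_of_forall_dual_eq_zero (R := ℝ) fun φ => ?_
  have hφ : φ.comp M.mkQL = 0 := hP.eq_zero_of_forall_apply_tp_eq_zero _ fun v => by
    have hv : P.tp v ∈ M := Submodule.le_topologicalClosure _ (Submodule.subset_span ⟨v, rfl⟩)
    simp [(Submodule.Quotient.mk_eq_zero M).2 hv]
  exact congr($hφ x)

end TensorProduct

section AeEqLp

variable {Ω E X : Type*} [MeasurableSpace Ω] {μ : Measure Ω} [NormedAddCommGroup X]
  {p : ℝ≥0∞} [Fact (1 ≤ p)]

theorem isSeqClosed_setOf_ae_eq_Lp [TopologicalSpace E] {F : Ω → E → X}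
    (hF : ∀ ω, Continuous (F ω)) {g : E → Lp X p μ} (hg : Continuous g) :
    IsSeqClosed {x | (fun ω => F ω x) =ᵐ[μ] g x} := by
  intro w x hw hwx
  obtain ⟨ns, hns, hae⟩ :=
    (tendstoInMeasure_of_tendsto_Lp ((hg.tendsto x).comp hwx)).exists_seq_tendsto_ae
  filter_upwards [hae, ae_all_iff.2 fun k => hw (ns k)] with ω hlim heq
  exact tendsto_nhds_unique
    ((((hF ω).tendsto x).comp (hwx.comp hns.tendsto_atTop)).congr heq) hlim

variable [NormedSpace ℝ X] [TopologicalSpace E] [AddCommGroup E] [Module ℝ E]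

def aeEqSubmodule (F : Ω → E →L[ℝ] X) (g : E →L[ℝ] Lp X p μ) : Submodule ℝ E where
  carrier := {x | (fun ω => F ω x) =ᵐ[μ] g x}
  zero_mem' := by
    have h0 : ⇑(g 0) =ᵐ[μ] 0 := by rw [map_zero]; exact Lp.coeFn_zero X p μ
    filter_upwards [h0] with ω hω
    rw [map_zero, hω, Pi.zero_apply]
  add_mem' {x y} hx hy := by
    have hadd : ⇑(g (x + y)) =ᵐ[μ] g x + g y := by rw [map_add]; exact Lp.coeFn_add _ _
    filter_upwards [hx, hy, hadd] with ω hx hy hxy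
    rw [map_add, hxy, Pi.add_apply, hx, hy]
  smul_mem' c x hx := by
    have hsmul : ⇑(g (c • x)) =ᵐ[μ] c • g x := by rw [map_smul]; exact Lp.coeFn_smul _ _
    filter_upwards [hx, hsmul] with ω hx hcx
    rw [map_smul, hcx, Pi.smul_apply, hx]

theorem ae_eq_of_dense_span [SequentialSpace E] {s : Set E}
    (hs : Dense (Submodule.span ℝ s : Set E)) {F : Ω → E →L[ℝ] X}
    {g : E →L[ℝ] Lp X p μ} (h : ∀ x ∈ s, (fun ω => F ω x) =ᵐ[μ] g x) (x : E) :
    (fun ω => F ω x) =ᵐ[μ] g x := by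
  have hclosed : IsClosed (aeEqSubmodule F g : Set E) :=
    (isSeqClosed_setOf_ae_eq_Lp (fun ω => (F ω).continuous) g.continuous).isClosed
  exact closure_minimal (Submodule.span_le.2 h : _ ⊆ (aeEqSubmodule F g : Set E)) hclosed (hs x)

end AeEqLp

theorem symTensorProduct_lp_general {ι : Type} [Fintype ι] {L : Type} (lab : ι → L)
    (V : L → Type u) [∀ l, NormedAddCommGroup (V l)] [∀ l, NormedSpace ℝ (V l)]
    [∀ l, CompleteSpace (V l)]
    (G : Subgroup (Equiv.Perm ι))
    (P : SymTPCandidate lab V) (hP : IsSymTensorProduct lab V G P)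
    {Ω : Type u} [MeasurableSpace Ω] (μ : Measure Ω)
    (X : Type u) [NormedAddCommGroup X] [NormedSpace ℝ X]
    (p : ℝ≥0∞) [hp1 : Fact (1 ≤ p)]
    (f : Ω → ContinuousMultilinearMap ℝ (fun i => V (lab i)) X)
    (hmem : ∀ v : ∀ i, V (lab i), MemLp (fun ω => f ω v) p μ)
    (ftilde : Ω → P.T →L[ℝ] X) (hft : ∀ ω v, ftilde ω (P.tp v) = f ω v)
    (g : P.T →L[ℝ] Lp X p μ)
    (hg : ∀ v : ∀ i, V (lab i), g (P.tp v) = MemLp.toLp (fun ω => f ω v) (hmem v)) :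
    ∀ x : P.T, MemLp (fun ω => ftilde ω x) p μ ∧
      (fun ω => ftilde ω x) =ᵐ[μ] ⇑(g x) := by
  intro x
  have hx : (fun ω => ftilde ω x) =ᵐ[μ] g x :=
    ae_eq_of_dense_span hP.dense_span_range_tp
      (by rintro _ ⟨v, rfl⟩; simpa only [hft, hg] using (hmem v).coeFn_toLp.symm) x
  exact ⟨(Lp.memLp (g x)).ae_eq hx.symm, hx⟩

/-- The universal property in `L^p`.
Let `(T, ⊗)` be a `G`-symmetric tensor product, `(Ω, 𝓕, P)` a probability space, `X` a
Banach space and `p ∈ [1, ∞)`.  Suppose `f(ω, ·)` is a `G`-symmetric continuous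
multilinear map for each `ω`, that `ω ↦ f(ω, v)` is in `L^p` for each `v`, and that the
multilinear map `v ↦ [f(·, v)] ∈ L^p(Ω; X)` is continuous.  If `f̃(ω, ·)` factors
`f(ω, ·)` through `⊗` and `g` factors `v ↦ [f(·, v)]` through `⊗`, then for every
`u ∈ T` the map `ω ↦ f̃(ω, u)` is `P`-a.e. equal to `g u`; in particular it is
`p`-integrable and `u ↦ [f̃(·, u)]` is the continuous linear map factoring the family
through `⊗`. -/
theorem symTensorProduct_lp {ι : Type} [Fintype ι] {L : Type} (lab : ι → L)
    (V : L → Type u) [∀ l, NormedAddCommGroup (V l)] [∀ l, NormedSpace ℝ (V l)]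
    [∀ l, CompleteSpace (V l)]
    (G : Subgroup (Equiv.Perm ι)) (hG : ∀ σ ∈ G, LabPres lab σ)
    (P : SymTPCandidate lab V) (hP : IsSymTensorProduct lab V G P)
    {Ω : Type u} [MeasurableSpace Ω] (μ : Measure Ω) [IsProbabilityMeasure μ]
    (X : Type u) [NormedAddCommGroup X] [NormedSpace ℝ X] [CompleteSpace X]
    (p : ℝ≥0∞) [hp1 : Fact (1 ≤ p)] (hptop : p ≠ ⊤)
    (f : Ω → ContinuousMultilinearMap ℝ (fun i => V (lab i)) X)
    (hsymm : ∀ ω, IsSymFun lab V G ⇑(f ω))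
    (hmem : ∀ v : ∀ i, V (lab i), MemLp (fun ω => f ω v) p μ)
    (hcont : Continuous fun v : ∀ i, V (lab i) =>
      MemLp.toLp (fun ω => f ω v) (hmem v))
    (ftilde : Ω → P.T →L[ℝ] X) (hft : ∀ ω v, ftilde ω (P.tp v) = f ω v)
    (g : P.T →L[ℝ] Lp X p μ)
    (hg : ∀ v : ∀ i, V (lab i), g (P.tp v) = MemLp.toLp (fun ω => f ω v) (hmem v)) :
    ∀ x : P.T, MemLp (fun ω => ftilde ω x) p μ ∧
      (fun ω => ftilde ω x) =ᵐ[μ] ⇑(g x) :=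
  symTensorProduct_lp_general lab V G P hP μ X p (hp1 := hp1) f hmem ftilde hft g hg

end SymTensor
end

section
/- Let H = ⨁_{n∈ℕ} H_n be an ℕ-graded bialgebra over ℝ whose degree-zero component H_0 is, as an ℝ-algebra, a free commutative (polynomial) algebra on finitely many generators g_1, …, g_d, each of which is primitive in H. Then H admits an antipode; that is, there exists a linear map S : H → H with m ∘ (S ⊗ id) ∘ Δ = η ∘ ε = m ∘ (id ⊗ S) ∘ Δ, so H is a Hopf algebra. -/
/-!
The antipode is the inverse of `id` in the convolution ring `End(H)`, and it is built in two
steps by the same device. If `F` is a family of subspaces with `Δ Fₙ ⊆ ∑_{p+q=n} F_p ⊗ F_q`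
and `u` agrees with the unit `η ∘ ε` on `F₀`, then `f = 1 - u` kills `F₀`, so `f ^ k` kills
every `Fₙ` with `n < k`; on each `Fₙ` the geometric series `∑ f ^ i` is therefore finite and
inverts `u`, and these partial sums glue to a single linear map.

First take `Fₙ = Mⁿ`, `M` the span of the primitive generators: this yields `w₀` inverting
`id` on the subalgebra they generate, which contains `H₀`. Then take the grading `Fₙ = Hₙ`
and `u = w₀ * id` (resp. `id * w₀`), which agrees with the unit on `H₀`: this yields a left
(resp. right) inverse of `id` on all of `H`, and the two coincide.
-/

open scoped TensorProduct
open Coalgebra WithConv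

namespace GradedAntipode

theorem exists_linearMap_eq_of_agree {K V W : Type*} [DivisionRing K] [AddCommGroup V]
    [Module K V] [AddCommGroup W] [Module K W] (F : ℕ → Submodule K V) (φ : ℕ → V →ₗ[K] W)
    (hφ : ∀ a N, a ≤ N → ∀ x ∈ F a, φ N x = φ a x) :
    ∃ w : V →ₗ[K] W, ∀ a, ∀ x ∈ F a, w x = φ a x := by
  let p : ℕ → V →ₗ.[K] W := fun N => (φ N).toPMap (partialSups F N)
  have hp : Monotone p := by
    refine fun N M hNM => ⟨partialSups_monotone F hNM, fun x y hxy => ?_⟩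
    suffices partialSups F N ≤ LinearMap.ker (φ M - φ N) by
      have := this x.2
      rw [LinearMap.mem_ker, LinearMap.sub_apply, sub_eq_zero] at this
      change φ N x = φ M y
      rw [← hxy, this]
    exact partialSups_le _ _ _ fun a ha y hy => by
      simp [hφ a M (ha.trans hNM) y hy, hφ a N ha y hy]
  have hdir : DirectedOn (· ≤ ·) (Set.range p) := hp.directed_le.directedOn_range
  obtain ⟨w, hw⟩ := LinearMap.exists_extend (LinearPMap.sSup _ hdir).toFun
  refine ⟨w, fun a x hx => ?_⟩
  have hxa : x ∈ (p a).domain := le_partialSups F a hx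
  exact (LinearMap.congr_fun hw ⟨x, _⟩).trans (LinearPMap.sSup_apply hdir ⟨a, rfl⟩ ⟨x, hxa⟩)

section TensorLevel

variable {R C : Type*} [CommSemiring R] [AddCommMonoid C] [Module R C]

def tensorLevel (F : ℕ → Submodule R C) (n : ℕ) : Submodule R (C ⊗[R] C) :=
  ⨆ (p : ℕ × ℕ) (_ : p.1 + p.2 = n),
    LinearMap.range (TensorProduct.map (F p.1).subtype (F p.2).subtype)

variable {F : ℕ → Submodule R C}

theorem tensorLevel_le {n : ℕ} {Q : Submodule R (C ⊗[R] C)}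
    (h : ∀ a b, a + b = n → ∀ y ∈ F a, ∀ z ∈ F b, y ⊗ₜ[R] z ∈ Q) : tensorLevel F n ≤ Q :=
  iSup₂_le fun p hp => by
    rw [← TensorProduct.mapIncl, TensorProduct.range_mapIncl, Submodule.map₂_le]
    exact fun y hy z hz => h p.1 p.2 hp y hy z hz

theorem tmul_mem_tensorLevel {a b n : ℕ} (hab : a + b = n) {y z : C} (hy : y ∈ F a)
    (hz : z ∈ F b) : y ⊗ₜ[R] z ∈ tensorLevel F n :=
  Submodule.mem_iSup_of_mem (a, b) <| Submodule.mem_iSup_of_mem hab ⟨⟨y, hy⟩ ⊗ₜ ⟨z, hz⟩, rfl⟩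

end TensorLevel

theorem tensorLevel_mul_le {R B : Type*} [CommSemiring R] [Semiring B] [Algebra R B]
    {F : ℕ → Submodule R B} (hF : ∀ a b, F a * F b ≤ F (a + b)) (m n : ℕ) :
    tensorLevel F m * tensorLevel F n ≤ tensorLevel F (m + n) := by
  refine Submodule.mul_le.2 fun s hs t ht => ?_
  suffices tensorLevel F m ≤ (tensorLevel F (m + n)).comap (LinearMap.mulRight R t) from this hs
  refine tensorLevel_le fun a b hab y hy z hz => ?_
  suffices tensorLevel F n ≤ (tensorLevel F (m + n)).comap (LinearMap.mulLeft R (y ⊗ₜ z)) from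
    this ht
  refine tensorLevel_le fun a' b' hab' y' hy' z' hz' => ?_
  simp only [Submodule.mem_comap, LinearMap.mulLeft_apply, Algebra.TensorProduct.tmul_mul_tmul]
  exact tmul_mem_tensorLevel (by omega) (hF a a' (Submodule.mul_mem_mul hy hy'))
    (hF b b' (Submodule.mul_mem_mul hz hz'))

def ComulCompatible {R C : Type*} [CommSemiring R] [AddCommMonoid C] [Module R C]
    [CoalgebraStruct R C] (F : ℕ → Submodule R C) : Prop :=
  ∀ n, ∀ x ∈ F n, comul (R := R) x ∈ tensorLevel F n

section Convolution

variable {R C A : Type*} [CommSemiring R] [AddCommMonoid C] [Module R C] [Coalgebra R C]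
  {F : ℕ → Submodule R C}

theorem ComulCompatible.convMul_apply_eq_zero [Semiring A] [Algebra R A]
    (hF : ComulCompatible F) {u v : WithConv (C →ₗ[R] A)} {i j : ℕ}
    (hu : ∀ a < i, ∀ x ∈ F a, u x = 0) (hv : ∀ b < j, ∀ y ∈ F b, v y = 0) {n : ℕ}
    (hn : n < i + j) {x : C} (hx : x ∈ F n) : (u * v) x = 0 := by
  suffices tensorLevel F n ≤
      LinearMap.ker (LinearMap.mul' R A ∘ₗ TensorProduct.map u.ofConv v.ofConv) from
    this (hF n x hx)
  refine tensorLevel_le fun a b hab y hy z hz => ?_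
  simp only [LinearMap.mem_ker, LinearMap.comp_apply, TensorProduct.map_tmul,
    LinearMap.mul'_apply]
  rcases lt_or_ge a i with ha | hb
  · rw [show u.ofConv y = 0 from hu a ha y hy, zero_mul]
  · rw [show v.ofConv z = 0 from hv b (by omega) z hz, mul_zero]

theorem ComulCompatible.pow_apply_eq_zero [Semiring A] [Algebra R A] (hF : ComulCompatible F)
    {f : WithConv (C →ₗ[R] A)} (hf : ∀ x ∈ F 0, f x = 0) {k n : ℕ} (hn : n < k) {x : C}
    (hx : x ∈ F n) : (f ^ k) x = 0 := by
  induction k generalizing n x with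
  | zero => omega
  | succ k ih =>
    rw [pow_succ]
    exact hF.convMul_apply_eq_zero (fun a ha y hy => ih ha hy)
      (fun b hb y hy => hf y (Nat.lt_one_iff.1 hb ▸ hy)) hn hx

theorem ComulCompatible.convMul_apply_congr [Ring A] [Algebra R A] (hF : ComulCompatible F)
    {u u' v v' : WithConv (C →ₗ[R] A)} {n : ℕ} (hu : ∀ a ≤ n, ∀ y ∈ F a, u y = u' y)
    (hv : ∀ b ≤ n, ∀ z ∈ F b, v z = v' z) {x : C} (hx : x ∈ F n) :
    (u * v) x = (u' * v') x := by
  have hdiff : u * v - u' * v' = (u - u') * v + u' * (v - v') := by noncomm_ring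
  have hleft : ((u - u') * v) x = 0 := hF.convMul_apply_eq_zero (i := n + 1) (j := 0)
    (fun a ha y hy => sub_eq_zero.2 (hu a (by omega) y hy)) (by simp) (by omega) hx
  have hright : (u' * (v - v')) x = 0 := hF.convMul_apply_eq_zero (i := 0) (j := n + 1)
    (by simp) (fun b hb z hz => sub_eq_zero.2 (hv b (by omega) z hz)) (by omega) hx
  rw [← sub_eq_zero]
  simpa [hleft, hright] using congr($hdiff x)

theorem ComulCompatible.exists_convInverse_on_iSup {K C A : Type*} [Field K] [AddCommGroup C]
    [Module K C] [Coalgebra K C] [Ring A] [Algebra K A] {F : ℕ → Submodule K C}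
    (hF : ComulCompatible F) {u : WithConv (C →ₗ[K] A)}
    (hu : ∀ x ∈ F 0, u x = algebraMap K A (counit x)) :
    ∃ w : WithConv (C →ₗ[K] A), ∀ x ∈ ⨆ n, F n,
      (w * u) x = algebraMap K A (counit x) ∧ (u * w) x = algebraMap K A (counit x) := by
  set f := 1 - u
  have hf : ∀ x ∈ F 0, f x = 0 := fun x hx => by simp [f, hu x hx]
  have hu' : u = 1 - f := by simp [f]
  let geom : ℕ → WithConv (C →ₗ[K] A) := fun N => ∑ i ∈ Finset.range N, f ^ i
  have hgeom : ∀ a N, a < N → ∀ x ∈ F a, geom N x = geom (a + 1) x := by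
    intro a N haN x hx
    simp only [geom, ofConv_sum, LinearMap.sum_apply]
    refine (Finset.sum_subset (Finset.range_subset_range.2 haN) fun i _ hi => ?_).symm
    exact hF.pow_apply_eq_zero hf (by simpa using hi) hx
  obtain ⟨w, hw⟩ := exists_linearMap_eq_of_agree F (fun a => (geom (a + 1)).ofConv)
    fun a N h x hx => hgeom a (N + 1) (by omega) x hx
  have hlocal : ∀ n, ∀ x ∈ F n, (toConv w * u) x = algebraMap K A (counit x) ∧
      (u * toConv w) x = algebraMap K A (counit x) := by
    intro n x hx
    have hwn : ∀ a ≤ n, ∀ y ∈ F a, toConv w y = geom (n + 1) y := fun a ha y hy =>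
      (hw a y hy).trans (hgeom a (n + 1) (by omega) y hy).symm
    have hfn : (f ^ (n + 1)) x = 0 := hF.pow_apply_eq_zero hf (Nat.lt_succ_self n) hx
    constructor
    · rw [hF.convMul_apply_congr hwn (fun _ _ _ _ => rfl) hx, hu', geom_sum_mul_neg]
      simp [hfn]
    · rw [hF.convMul_apply_congr (fun _ _ _ _ => rfl) hwn hx, hu', mul_neg_geom_sum]
      simp [hfn]
  refine ⟨toConv w, fun x hx => ?_⟩
  induction hx using Submodule.iSup_induction' with
  | mem n x hx => exact hlocal n x hx
  | zero => simp
  | add x y _ _ hx hy =>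
    exact ⟨by simp only [map_add, hx.1, hy.1], by simp only [map_add, hx.2, hy.2]⟩

end Convolution

section Bialgebra

variable {K B : Type*}

theorem comulCompatible_pow [CommSemiring K] [Semiring B] [Bialgebra K B] {M : Submodule K B}
    (hM : ∀ x ∈ M, comul (R := K) x ∈ tensorLevel (M ^ ·) 1) : ComulCompatible (M ^ ·) := by
  intro n x hx
  induction n generalizing x with
  | zero =>
    have hone : (1 : B) ∈ M ^ 0 := Submodule.one_le.1 (pow_zero M).ge
    dsimp only at hx ⊢
    rw [pow_zero] at hx
    obtain ⟨r, rfl⟩ := Submodule.mem_one.1 hx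
    rw [Bialgebra.comul_algebraMap, Algebra.algebraMap_eq_smul_one,
      Algebra.TensorProduct.one_def]
    exact Submodule.smul_mem _ r (tmul_mem_tensorLevel (a := 0) (b := 0) rfl hone hone)
  | succ n ih =>
    suffices M ^ n * M ≤ (tensorLevel (M ^ ·) (n + 1)).comap (comul (R := K)) from
      (pow_succ M n ▸ this) hx
    refine Submodule.mul_le.2 fun y hy z hz => ?_
    rw [Submodule.mem_comap, Bialgebra.comul_mul]
    exact tensorLevel_mul_le (fun a b => (pow_add M a b).ge) n 1
      (Submodule.mul_mem_mul (ih y hy) (hM z hz))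

theorem comulCompatible_span_pow [CommSemiring K] [Semiring B] [Bialgebra K B] {s : Set B}
    (hs : ∀ x ∈ s, comul (R := K) x = x ⊗ₜ 1 + 1 ⊗ₜ x) :
    ComulCompatible (Submodule.span K s ^ ·) := by
  refine comulCompatible_pow fun x hx => ?_
  have hone : (1 : B) ∈ Submodule.span K s ^ 0 := Submodule.one_le.1 (pow_zero _).ge
  suffices Submodule.span K s ≤ (tensorLevel (Submodule.span K s ^ ·) 1).comap (comul (R := K))
    from this hx
  refine Submodule.span_le.2 fun y hy => ?_
  have hy' : y ∈ Submodule.span K s ^ 1 := by simpa using Submodule.subset_span hy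
  rw [SetLike.mem_coe, Submodule.mem_comap, hs y hy]
  exact add_mem (tmul_mem_tensorLevel (a := 1) (b := 0) rfl hy' hone)
    (tmul_mem_tensorLevel (a := 0) (b := 1) rfl hone hy')

theorem mem_iSup_span_pow_of_mem_closure [CommSemiring K] [Semiring B] [Algebra K B]
    {s : Set B} {x : B} (hx : x ∈ Submonoid.closure s) : x ∈ ⨆ n, Submodule.span K s ^ n := by
  suffices ∃ n, x ∈ Submodule.span K s ^ n from
    this.elim fun n hn => Submodule.mem_iSup_of_mem n hn
  induction hx using Submonoid.closure_induction with
  | mem x hx => exact ⟨1, by simpa using Submodule.subset_span hx⟩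
  | one => exact ⟨0, Submodule.one_le.1 (pow_zero _).ge⟩
  | mul x y _ _ hx hy =>
    obtain ⟨a, ha⟩ := hx
    obtain ⟨b, hb⟩ := hy
    exact ⟨a + b, pow_add (Submodule.span K s) a b ▸ Submodule.mul_mem_mul ha hb⟩

theorem exists_antipode_on_iSup_span_pow [Field K] [Ring B] [Bialgebra K B] {s : Set B}
    (hs : ∀ x ∈ s, comul (R := K) x = x ⊗ₜ 1 + 1 ⊗ₜ x) :
    ∃ w : WithConv (B →ₗ[K] B), ∀ x ∈ ⨆ n, Submodule.span K s ^ n,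
      (w * toConv (LinearMap.id : B →ₗ[K] B)) x = algebraMap K B (counit x) ∧
        (toConv (LinearMap.id : B →ₗ[K] B) * w) x = algebraMap K B (counit x) :=
  (comulCompatible_span_pow hs).exists_convInverse_on_iSup fun x hx => by
    obtain ⟨r, rfl⟩ := Submodule.mem_one.1 (pow_zero (Submodule.span K s) ▸ hx)
    simp

end Bialgebra

end GradedAntipode

open GradedAntipode in
theorem graded_bialgebra_antipode_general
    (H : Type*) [Ring H] [Bialgebra ℝ H]
    (𝒜 : ℕ → Submodule ℝ H) (hdecomp : DirectSum.IsInternal 𝒜)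
    (hcomul_graded : ∀ n : ℕ, ∀ x ∈ 𝒜 n,
      Coalgebra.comul (R := ℝ) x ∈
        ⨆ (p : ℕ × ℕ) (_ : p.1 + p.2 = n),
          LinearMap.range (TensorProduct.map (𝒜 p.1).subtype (𝒜 p.2).subtype))
    (dgen : ℕ) (g : Fin dgen → H)
    (hprim : ∀ i, Coalgebra.comul (R := ℝ) (g i) = g i ⊗ₜ[ℝ] 1 + 1 ⊗ₜ[ℝ] g i)
    (hspan : 𝒜 0 = Submodule.span ℝ (Set.range fun k : Fin dgen → ℕ => ((List.finRange dgen).map fun i => g i ^ k i).prod)) :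
    ∃ S : H →ₗ[ℝ] H,
      (LinearMap.mul' ℝ H).comp ((LinearMap.rTensor H S).comp (Coalgebra.comul (R := ℝ))) =
        (Algebra.linearMap ℝ H).comp (Coalgebra.counit (R := ℝ)) ∧
      (LinearMap.mul' ℝ H).comp ((LinearMap.lTensor H S).comp (Coalgebra.comul (R := ℝ))) =
        (Algebra.linearMap ℝ H).comp (Coalgebra.counit (R := ℝ)) := by
  obtain ⟨w₀, hw₀⟩ := exists_antipode_on_iSup_span_pow (K := ℝ) (s := Set.range g) <| by
    rintro _ ⟨i, rfl⟩
    exact hprim i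
  have h𝒜₀ : 𝒜 0 ≤ ⨆ n, Submodule.span ℝ (Set.range g) ^ n := by
    rw [hspan, Submodule.span_le]
    rintro _ ⟨k, rfl⟩
    exact mem_iSup_span_pow_of_mem_closure <| Submonoid.list_prod_mem _ <|
      List.forall_mem_map.2 fun i _ => pow_mem (Submonoid.subset_closure (Set.mem_range_self i)) _
  obtain ⟨wL, hwL⟩ := ComulCompatible.exists_convInverse_on_iSup hcomul_graded
    (u := w₀ * toConv LinearMap.id) fun x hx => (hw₀ x (h𝒜₀ hx)).1
  obtain ⟨wR, hwR⟩ := ComulCompatible.exists_convInverse_on_iSup hcomul_graded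
    (u := toConv LinearMap.id * w₀) fun x hx => (hw₀ x (h𝒜₀ hx)).2
  have htop (x : H) : x ∈ ⨆ n, 𝒜 n := hdecomp.submodule_iSup_eq_top ▸ Submodule.mem_top
  have hL : wL * w₀ * toConv LinearMap.id = 1 := by
    ext x
    rw [mul_assoc]
    exact (hwL x (htop x)).1
  have hR : toConv LinearMap.id * (w₀ * wR) = 1 := by
    ext x
    rw [← mul_assoc]
    exact (hwR x (htop x)).2
  refine ⟨(wL * w₀).ofConv, congr(ofConv $hL), ?_⟩
  rw [left_inv_eq_right_inv hL hR]
  exact congr(ofConv $hR)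

/-- Existence of the antipode for suitable graded bialgebras.
Let `H = ⨁ₙ Hₙ` be an `ℕ`-graded bialgebra over `ℝ` whose degree-zero component `H₀` is,
as an `ℝ`-algebra, a free commutative polynomial algebra on finitely many generators
`g₁, …, g_d`, each of which is primitive.  Then `H` admits an antipode `S`, i.e. a
linear map with `m ∘ (S ⊗ id) ∘ Δ = η ∘ ε = m ∘ (id ⊗ S) ∘ Δ`, so `H` is a Hopf
algebra. -/
theorem graded_bialgebra_antipode
    (H : Type*) [Ring H] [Bialgebra ℝ H]
    (𝒜 : ℕ → Submodule ℝ H) (hdecomp : DirectSum.IsInternal 𝒜)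
    (hone : (1 : H) ∈ 𝒜 0)
    (hmul : ∀ i j : ℕ, ∀ x ∈ 𝒜 i, ∀ y ∈ 𝒜 j, x * y ∈ 𝒜 (i + j))
    (hcomul_graded : ∀ n : ℕ, ∀ x ∈ 𝒜 n,
      Coalgebra.comul (R := ℝ) x ∈
        ⨆ (p : ℕ × ℕ) (_ : p.1 + p.2 = n),
          LinearMap.range (TensorProduct.map (𝒜 p.1).subtype (𝒜 p.2).subtype))
    (dgen : ℕ) (g : Fin dgen → H)
    (hcomm : ∀ i j, Commute (g i) (g j))
    (hprim : ∀ i, Coalgebra.comul (R := ℝ) (g i) = g i ⊗ₜ[ℝ] 1 + 1 ⊗ₜ[ℝ] g i)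
    (hLI : LinearIndependent ℝ fun k : Fin dgen → ℕ => ((List.finRange dgen).map fun i => g i ^ k i).prod)
    (hspan : 𝒜 0 = Submodule.span ℝ (Set.range fun k : Fin dgen → ℕ => ((List.finRange dgen).map fun i => g i ^ k i).prod)) :
    ∃ S : H →ₗ[ℝ] H,
      (LinearMap.mul' ℝ H).comp ((LinearMap.rTensor H S).comp (Coalgebra.comul (R := ℝ))) =
        (Algebra.linearMap ℝ H).comp (Coalgebra.counit (R := ℝ)) ∧
      (LinearMap.mul' ℝ H).comp ((LinearMap.lTensor H S).comp (Coalgebra.comul (R := ℝ))) =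
        (Algebra.linearMap ℝ H).comp (Coalgebra.counit (R := ℝ)) :=
  graded_bialgebra_antipode_general H 𝒜 hdecomp hcomul_graded dgen g hprim hspan
end

section
/- Let d ≥ 1, let s ∈ (0,∞)^d be a scaling, let r > 0, and let A ⊆ {k ∈ ℕ^d : |k|_s < r} be a nonempty downward-closed set of multi-indices (k ∈ A and l ≤ k componentwise imply l ∈ A; in particular 0 ∈ A). Suppose f : ℝ^d → ℝ has continuous partial derivatives ∂^k for every multi-index k with |k|_s ≤ r. Then for every x ∈ ℝ^d: f(x) = Σ_{k∈A} (1/k!) ∂^k f(0) x^k + Σ_{k∈∂A} (x^{k↓}/k↓!) ∫_{ℝ^d} δ_k[∂^{k↓} f]((x_1 y_1, …, x_d y_d)) Q^{k↓}(dy), where ∂A = {k ∈ ℕ^d ∖ A : k↓ ∈ A}. -/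
open MeasureTheory
open scoped BigOperators

namespace AnisoTaylor

variable {d : ℕ}

/-- First-order partial derivative in direction `i`. -/
noncomputable def pd (i : Fin d) (f : (Fin d → ℝ) → ℝ) : (Fin d → ℝ) → ℝ :=
  fun x => fderiv ℝ f x (Pi.single i 1)

/-- Iterated partial derivative `∂^k`. -/
noncomputable def mderiv (k : Fin d → ℕ) (f : (Fin d → ℝ) → ℝ) : (Fin d → ℝ) → ℝ :=
  (List.finRange d).foldr (fun i g => (pd i)^[k i] g) f

/-- Scaled degree `|k|_s = Σ sᵢ kᵢ`. -/
noncomputable def sdeg (s : Fin d → ℝ) (k : Fin d → ℕ) : ℝ := ∑ i, s i * k i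

/-- The position (as a natural number) of the least nonzero entry of `k`
(junk value `0` for `k = 0`). -/
noncomputable def mPos (k : Fin d → ℕ) : ℕ :=
  sInf {m : ℕ | ∃ j : Fin d, (j : ℕ) = m ∧ k j ≠ 0}

/-- `k↓ = k − e_{𝔪(k)}`. -/
noncomputable def kdown (k : Fin d → ℕ) : Fin d → ℕ :=
  fun i => if (i : ℕ) = mPos k then k i - 1 else k i

/-- Truncation keeping the first `m` coordinates: `(y₁, …, y_m, 0, …, 0)`. -/
def trunc (m : ℕ) (y : Fin d → ℝ) : Fin d → ℝ := fun i => if (i : ℕ) < m then y i else 0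

/-- `δ_k[g](y) = g(y₁,…,y_{𝔪(k)},0,…,0) − g(y₁,…,y_{𝔪(k)−1},0,…,0)`. -/
noncomputable def deltaK (k : Fin d → ℕ) (g : (Fin d → ℝ) → ℝ) (y : Fin d → ℝ) : ℝ :=
  g (trunc (mPos k + 1) y) - g (trunc (mPos k) y)

/-- The measure `Q^k` on `ℝ^d`:
`(∏_{i<𝔪(k)} δ₁) ⊗ (l·1_{[0,1]}(y)(1−y)^{l−1} dy) ⊗ (∏_{i>𝔪(k)} δ₀)` with
`l = k_{𝔪(k)}`, and `Q^0 = ∏ δ₁`. -/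
noncomputable def Qmeas (k : Fin d → ℕ) : Measure (Fin d → ℝ) :=
  Measure.pi fun i =>
    if ∀ j, k j = 0 then Measure.dirac 1
    else if (i : ℕ) < mPos k then Measure.dirac 1
    else if (i : ℕ) = mPos k then
      (volume.restrict (Set.Icc (0 : ℝ) 1)).withDensity fun y =>
        ENNReal.ofReal ((k i : ℝ) * (1 - y) ^ (k i - 1))
    else Measure.dirac 0

/-- The boundary `∂A = {k ∉ A : k↓ ∈ A}` of a downward-closed finite set of
multi-indices, as a finite set. -/
noncomputable def bdry (A : Finset (Fin d → ℕ)) : Finset (Fin d → ℕ) :=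
  (A.biUnion fun l =>
      (Finset.univ : Finset (Fin d)).image fun i j => l j + if j = i then 1 else 0).filter
    fun k => k ∉ A ∧ kdown k ∈ A

/-!
Induction on `A`, removing a maximal `k ≠ 0`. Write `k = m + e_j` with `j = 𝔪(k)` and `m = k↓`:
the boundary loses `k` and gains exactly the `k + e_i` with `i ≤ j`, so it suffices that the
remainder term of `k` is `∂^k f(0) x^k / k!` plus the remainder terms of the `k + e_i`.

Whenever `i ≤ 𝔪(n)`, the measure `Q^n` is `δ₁` in the coordinates below `i`, so the remainder
term of `n + e_i` is `x^n / n!` times an integral of an increment of `∂^n f` along the segment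
`t ↦ (x₁, …, x_{i-1}, t x_i, 0, …, 0)` against the Beta`(1, n_i)` law (`δ₁` if `n_i = 0`).
Integrating by parts turns the remainder of `k` into `x^k / k!` times the integral of `∂^k f`
along the `j`-segment against Beta`(1, k_j)`; the term of `k + e_j` is that integral minus `∂^k f`
at the start of the segment, and the terms of `k + e_i`, `i < j`, telescope from there
down to `∂^k f(0)`. For `A = {0}` the boundary terms telescope to `f(x) - f(0)`.
-/

section MultiIndex

variable {k m n : Fin d → ℕ} {i j : Fin d}

lemma mPos_eq (hj : k j ≠ 0) (hlow : ∀ i < j, k i = 0) : mPos k = j := by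
  refine le_antisymm (Nat.sInf_le ⟨j, rfl, hj⟩) (le_csInf ⟨j, j, rfl, hj⟩ ?_)
  rintro _ ⟨i, rfl, hi⟩
  by_contra! hij
  exact hi (hlow i hij)

lemma exists_first_ne_zero (hk : k ≠ 0) : ∃ j : Fin d, k j ≠ 0 ∧ ∀ i < j, k i = 0 := by
  obtain ⟨j, hj⟩ := Function.ne_iff.mp hk
  induction j using WellFoundedLT.induction with
  | ind j ih =>
    by_cases hlow : ∀ i < j, k i = 0
    · exact ⟨j, hj, hlow⟩
    · push Not at hlow
      obtain ⟨i, hij, hi⟩ := hlow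
      exact ih i hij hi

lemma le_mPos (h0 : ∀ i < j, k i = 0) (hk : k ≠ 0) : (j : ℕ) ≤ mPos k := by
  obtain ⟨j', hj', hlow⟩ := exists_first_ne_zero hk
  rw [mPos_eq hj' hlow, Fin.val_fin_le]
  exact not_lt.mp fun h => hj' (h0 j' h)

lemma eq_zero_of_lt_mPos (hi : (i : ℕ) < mPos k) : k i = 0 := by
  by_contra hki
  have : mPos k ≤ i := Nat.sInf_le ⟨i, rfl, hki⟩
  omega

lemma mPos_add_single (h0 : ∀ i < j, k i = 0) : mPos (k + Pi.single j 1) = j :=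
  mPos_eq (by simp) fun i hi => by simp [h0 i hi, hi.ne]

lemma kdown_add_single (h0 : ∀ i < j, k i = 0) : kdown (k + Pi.single j 1) = k := by
  funext i
  simp only [kdown, mPos_add_single h0, Fin.val_inj]
  split_ifs with h <;> simp [h]

lemma exists_eq_add_single (hk : k ≠ 0) :
    ∃ (m : Fin d → ℕ) (j : Fin d), (∀ i < j, m i = 0) ∧ k = m + Pi.single j 1 := by
  obtain ⟨j, hj, hlow⟩ := exists_first_ne_zero hk
  refine ⟨k - Pi.single j 1, j, fun i hi => by simp [hlow i hi], ?_⟩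
  funext i
  rcases eq_or_ne i j with rfl | hij
  · simp only [Pi.add_apply, Pi.sub_apply, Pi.single_eq_same]
    omega
  · simp [hij]

lemma kdown_eq_iff (hn : n ≠ 0) :
    kdown n = k ↔ ∃ i, (∀ i' < i, k i' = 0) ∧ n = k + Pi.single i 1 := by
  constructor
  · obtain ⟨m, j, h0, rfl⟩ := exists_eq_add_single hn
    rintro rfl
    exact ⟨j, by rwa [kdown_add_single h0], by rw [kdown_add_single h0]⟩
  · rintro ⟨i, h0, rfl⟩
    exact kdown_add_single h0

lemma forall_lt_add_single_eq_zero_iff (h0 : ∀ i < j, m i = 0) :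
    (∀ i' < i, (m + Pi.single j 1 : Fin d → ℕ) i' = 0) ↔ i ≤ j := by
  refine ⟨fun h => ?_, fun hij i' hi' => ?_⟩
  · by_contra! hji
    simpa using h j hji
  · have hi'j : i' < j := hi'.trans_le hij
    simp [h0 i' hi'j, hi'j.ne]

lemma filter_forall_lt_add_single_eq_zero {m : Fin d → ℕ} {j : Fin d} (h0 : ∀ i < j, m i = 0) :
    Finset.univ.filter (fun i => ∀ i' < i, (m + Pi.single j 1 : Fin d → ℕ) i' = 0) =
      Finset.Iic j := by
  ext i
  rw [Finset.mem_filter, Finset.mem_Iic, forall_lt_add_single_eq_zero_iff h0]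
  simp

end MultiIndex

section MixedDerivative

variable {f : (Fin d → ℝ) → ℝ} {k : Fin d → ℕ} {j : Fin d}

lemma mderiv_zero : mderiv 0 f = f := by
  simp [mderiv]

lemma foldr_iterate_pd_add_single {L : List (Fin d)} (hL : L.Pairwise (· < ·)) (hj : j ∈ L)
    (h0 : ∀ i < j, k i = 0) :
    L.foldr (fun i g => (pd i)^[(k + Pi.single j 1 : Fin d → ℕ) i] g) f =
      pd j (L.foldr (fun i g => (pd i)^[k i] g) f) := by
  induction L with
  | nil => simp at hj
  | cons a L ih =>
    obtain ⟨ha, hL⟩ := List.pairwise_cons.mp hL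
    rcases List.mem_cons.mp hj with rfl | hjL
    · have hjL : j ∉ L := fun h => lt_irrefl j (ha j h)
      rw [List.foldr_cons, List.foldr_cons, List.foldr_ext _ _ _ fun i hi _ => by
        rw [Pi.add_apply, Pi.single_eq_of_ne (ne_of_mem_of_not_mem hi hjL), add_zero]]
      simp only [Pi.add_apply, Pi.single_eq_same, Function.iterate_succ_apply']
    · have haj := ha j hjL
      rw [List.foldr_cons, List.foldr_cons, ih hL hjL]
      simp [h0 a haj, haj.ne]

lemma mderiv_add_single (h0 : ∀ i < j, k i = 0) :
    mderiv (k + Pi.single j 1) f = pd j (mderiv k f) :=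
  foldr_iterate_pd_add_single (List.pairwise_lt_finRange d) (List.mem_finRange j) h0

end MixedDerivative

section Truncation

def truncLine (x : Fin d → ℝ) (j : Fin d) (t : ℝ) : Fin d → ℝ :=
  trunc j x + t • Pi.single j (x j)

variable {x y : Fin d → ℝ} {j : Fin d}

lemma trunc_zero (x : Fin d → ℝ) : trunc 0 x = 0 := by
  funext i
  simp [trunc]

lemma trunc_eq_self (x : Fin d → ℝ) : trunc d x = x := by
  funext i
  simp [trunc]

lemma truncLine_zero : truncLine x j 0 = trunc j x := by
  simp [truncLine]

lemma truncLine_apply (t : ℝ) (i : Fin d) :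
    truncLine x j t i = if (i : ℕ) < j then x i else if i = j then t * x i else 0 := by
  rcases lt_trichotomy i j with h | rfl | h
  · simp [truncLine, trunc, h, h.ne]
  · simp [truncLine, trunc]
  · simp [truncLine, trunc, h.ne', not_lt.mpr h.le]

lemma truncLine_one : truncLine x j 1 = trunc ((j : ℕ) + 1) x := by
  funext i
  rcases lt_trichotomy i j with h | rfl | h
  · simp [truncLine_apply, trunc, Fin.lt_def.mp h, Nat.lt_succ_of_lt (Fin.lt_def.mp h)]
  · simp [truncLine_apply, trunc]
  · simp [truncLine_apply, trunc, h.ne', not_le.mpr h, not_lt.mpr h.le]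

lemma trunc_mul_eq (hy : ∀ i < j, y i = 1) : trunc j (fun i => x i * y i) = trunc j x := by
  funext i
  by_cases h : (i : ℕ) < j
  · simp [trunc, h, hy i h]
  · simp [trunc, h]

lemma trunc_succ_mul_eq (hy : ∀ i < j, y i = 1) :
    trunc ((j : ℕ) + 1) (fun i => x i * y i) = truncLine x j (y j) := by
  funext i
  rcases lt_trichotomy i j with h | rfl | h
  · simp [truncLine_apply, trunc, hy i h, Fin.lt_def.mp h, Nat.lt_succ_of_lt (Fin.lt_def.mp h)]
  · simp [truncLine_apply, trunc, mul_comm]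
  · simp [truncLine_apply, trunc, h.ne', not_le.mpr h, not_lt.mpr h.le]

lemma continuous_truncLine : Continuous (truncLine x j) :=
  continuous_const.add (continuous_id.smul continuous_const)

lemma hasDerivAt_comp_truncLine {g : (Fin d → ℝ) → ℝ} (hg : Differentiable ℝ g) (t : ℝ) :
    HasDerivAt (fun t => g (truncLine x j t)) (x j * pd j g (truncLine x j t)) t := by
  have hv : (Pi.single j (x j) : Fin d → ℝ) = x j • Pi.single j 1 := by
    rw [← Pi.single_smul', smul_eq_mul, mul_one]
  refine ((hg _).hasFDerivAt.comp_hasDerivAt t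
    (((hasDerivAt_id t).smul_const (Pi.single j (x j))).const_add (trunc j x))).congr_deriv ?_
  change fderiv ℝ g (truncLine x j t) ((1 : ℝ) • Pi.single j (x j)) = _
  rw [one_smul, hv, map_smul, smul_eq_mul]
  rfl

end Truncation

section TaylorWeight

/-- The Beta`(1, l)` law, extended by its limit `δ₁` at `l = 0`. -/
noncomputable def taylorWeight (l : ℕ) : Measure ℝ :=
  if l = 0 then Measure.dirac 1
  else (volume.restrict (Set.Icc (0 : ℝ) 1)).withDensity fun t =>
    ENNReal.ofReal ((l : ℝ) * (1 - t) ^ (l - 1))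

variable {l : ℕ}

lemma taylorWeight_zero : taylorWeight 0 = Measure.dirac 1 := if_pos rfl

lemma integral_taylorWeight (hl : l ≠ 0) (h : ℝ → ℝ) :
    ∫ t, h t ∂taylorWeight l = ∫ t in (0 : ℝ)..1, (l : ℝ) * (1 - t) ^ (l - 1) * h t := by
  rw [taylorWeight, if_neg hl, integral_withDensity_eq_integral_toReal_smul (by fun_prop)
    (ae_of_all _ fun _ => ENNReal.ofReal_lt_top), integral_Icc_eq_integral_Ioc,
    intervalIntegral.integral_of_le zero_le_one]
  refine setIntegral_congr_fun measurableSet_Ioc fun t ht => ?_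
  rw [ENNReal.toReal_ofReal (by have := ht.2; positivity), smul_eq_mul]

lemma integral_taylorDensity (hl : l ≠ 0) : ∫ t in (0 : ℝ)..1, (l : ℝ) * (1 - t) ^ (l - 1) = 1 := by
  obtain ⟨n, rfl⟩ := Nat.exists_eq_add_one_of_ne_zero hl
  have hsub : ∫ t in (0 : ℝ)..1, (1 - t) ^ n = ∫ t in (0 : ℝ)..1, t ^ n := by
    simpa using
      intervalIntegral.integral_comp_sub_left (fun t : ℝ => t ^ n) (1 : ℝ) (a := 0) (b := 1)
  rw [Nat.add_sub_cancel, intervalIntegral.integral_const_mul, hsub, integral_pow]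
  field_simp
  simp

instance isProbabilityMeasure_taylorWeight : IsProbabilityMeasure (taylorWeight l) := by
  by_cases hl : l = 0
  · rw [hl, taylorWeight_zero]
    infer_instance
  · constructor
    have hmass := integral_const (μ := taylorWeight l) (1 : ℝ)
    simp only [integral_taylorWeight hl, mul_one, integral_taylorDensity hl, smul_eq_mul,
      measureReal_def] at hmass
    exact (ENNReal.toReal_eq_one_iff _).mp hmass.symm

lemma ae_mem_Icc_taylorWeight (l : ℕ) : ∀ᵐ t ∂taylorWeight l, t ∈ Set.Icc (0 : ℝ) 1 := by
  unfold taylorWeight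
  split_ifs
  · exact (ae_dirac_iff measurableSet_Icc).mpr ⟨zero_le_one, le_rfl⟩
  · exact (withDensity_absolutelyContinuous _ _).ae_le (ae_restrict_mem measurableSet_Icc)

lemma integrable_taylorWeight {h : ℝ → ℝ} (hh : Continuous h) : Integrable h (taylorWeight l) := by
  rw [← Measure.restrict_eq_self_of_ae_mem (ae_mem_Icc_taylorWeight l)]
  exact hh.continuousOn.integrableOn_compact isCompact_Icc

lemma integral_taylorDensity_mul_sub (hl : l ≠ 0) {φ φ' : ℝ → ℝ}
    (hφ : ∀ t, HasDerivAt φ (φ' t) t) (hφ' : Continuous φ') :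
    ∫ t in (0 : ℝ)..1, (l : ℝ) * (1 - t) ^ (l - 1) * (φ t - φ 0) =
      ∫ t in (0 : ℝ)..1, (1 - t) ^ l * φ' t := by
  have hφc : Continuous φ := continuous_iff_continuousAt.mpr fun t => (hφ t).continuousAt
  have hu : ∀ t, HasDerivAt (fun t : ℝ => -(1 - t) ^ l) (l * (1 - t) ^ (l - 1)) t := fun t =>
    (((hasDerivAt_id t).const_sub 1).pow l).neg.congr_deriv (by simp)
  have hparts := intervalIntegral.integral_deriv_mul_eq_sub (a := 0) (b := 1)
    (fun t _ => hu t) (fun t _ => (hφ t).sub_const (φ 0))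
    ((by fun_prop : Continuous fun t : ℝ => (l : ℝ) * (1 - t) ^ (l - 1)).intervalIntegrable 0 1)
    (hφ'.intervalIntegrable 0 1)
  rw [intervalIntegral.integral_add (by apply Continuous.intervalIntegrable; fun_prop)
    (by apply Continuous.intervalIntegrable; fun_prop)] at hparts
  simp only [sub_self, zero_pow hl, neg_zero, zero_mul, mul_zero, sub_zero, neg_mul,
    intervalIntegral.integral_neg] at hparts
  linarith

lemma mul_integral_taylorWeight_sub {φ φ' : ℝ → ℝ} (hφ : ∀ t, HasDerivAt φ (φ' t) t)
    (hφ' : Continuous φ') :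
    ((l : ℝ) + 1) * ∫ t, (φ t - φ 0) ∂taylorWeight l = ∫ t, φ' t ∂taylorWeight (l + 1) := by
  rw [integral_taylorWeight (Nat.add_one_ne_zero l), Nat.add_sub_cancel, Nat.cast_succ]
  rcases eq_or_ne l 0 with rfl | hl
  · simp only [taylorWeight_zero, integral_dirac, Nat.cast_zero, zero_add, one_mul, pow_zero]
    rw [intervalIntegral.integral_eq_sub_of_hasDerivAt (fun t _ => hφ t)
      (hφ'.intervalIntegrable 0 1)]
  · rw [integral_taylorWeight hl, integral_taylorDensity_mul_sub hl hφ hφ',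
      ← intervalIntegral.integral_const_mul]
    exact intervalIntegral.integral_congr fun t _ => by ring

end TaylorWeight

section QMeasure

noncomputable def Qfactor (k : Fin d → ℕ) (i : Fin d) : Measure ℝ :=
  if ∀ j, k j = 0 then Measure.dirac 1
  else if (i : ℕ) < mPos k then Measure.dirac 1
  else if (i : ℕ) = mPos k then
    (volume.restrict (Set.Icc (0 : ℝ) 1)).withDensity fun y =>
      ENNReal.ofReal ((k i : ℝ) * (1 - y) ^ (k i - 1))
  else Measure.dirac 0

variable {k : Fin d → ℕ} {i j : Fin d}

lemma Qmeas_eq_pi (k : Fin d → ℕ) : Qmeas k = Measure.pi (Qfactor k) := rfl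

lemma Qfactor_of_lt (h0 : ∀ i < j, k i = 0) (hi : i < j) : Qfactor k i = Measure.dirac 1 := by
  by_cases hk : k = 0
  · simp [Qfactor, hk]
  · have : (i : ℕ) < mPos k := (Fin.lt_def.mp hi).trans_le (le_mPos h0 hk)
    simp [Qfactor, this]

lemma Qfactor_self (h0 : ∀ i < j, k i = 0) : Qfactor k j = taylorWeight (k j) := by
  by_cases hk : k = 0
  · simp [Qfactor, taylorWeight, hk]
  · have hall : ¬ ∀ j, k j = 0 := fun h => hk (funext h)
    rcases (le_mPos h0 hk).lt_or_eq with hlt | heq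
    · simp [Qfactor, taylorWeight, hall, hlt, eq_zero_of_lt_mPos hlt]
    · obtain ⟨j', hj', hlow⟩ := exists_first_ne_zero hk
      obtain rfl : j = j' := Fin.ext (heq.trans (mPos_eq hj' hlow))
      simp [Qfactor, taylorWeight, hall, heq, hj']

instance isProbabilityMeasure_Qfactor (k : Fin d → ℕ) (i : Fin d) :
    IsProbabilityMeasure (Qfactor k i) := by
  by_cases hk : k = 0
  · rw [Qfactor, if_pos fun j => by simp [hk]]
    infer_instance
  obtain ⟨j, hj, hlow⟩ := exists_first_ne_zero hk
  rcases lt_trichotomy i j with h | rfl | h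
  · rw [Qfactor_of_lt hlow h]
    infer_instance
  · rw [Qfactor_self hlow]
    infer_instance
  · have : ¬ (i : ℕ) ≤ mPos k := by rw [mPos_eq hj hlow]; exact not_le.mpr h
    rw [Qfactor, if_neg (show ¬ ∀ j, k j = 0 from fun h => hk (funext h)), if_neg (by omega),
      if_neg (by omega)]
    infer_instance

lemma integral_Qmeas (h0 : ∀ i < j, k i = 0) {F : ℝ → ℝ} (hF : Continuous F)
    {G : (Fin d → ℝ) → ℝ} (hG : ∀ y, (∀ i < j, y i = 1) → G y = F (y j)) :
    ∫ y, G y ∂Qmeas k = ∫ t, F t ∂taylorWeight (k j) := by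
  rw [Qmeas_eq_pi]
  have hone : ∀ᵐ y ∂Measure.pi (Qfactor k), ∀ i < j, y i = 1 := by
    refine Filter.eventually_all.mpr fun i => ?_
    by_cases hi : i < j
    · have h1 : ∀ᵐ t ∂Qfactor k i, t = 1 := by
        rw [Qfactor_of_lt h0 hi]
        exact (ae_dirac_iff (measurableSet_singleton 1)).mpr rfl
      filter_upwards [Measure.tendsto_eval_ae_ae.eventually h1] with y hy using fun _ => hy
    · exact ae_of_all _ fun y h => absurd h hi
  rw [integral_congr_ae (hone.mono hG), integral_comp_eval hF.aestronglyMeasurable,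
    Qfactor_self h0]

end QMeasure

section Telescoping

variable (g : (Fin d → ℝ) → ℝ) (x : Fin d → ℝ)

lemma sum_Iio_trunc_sub (j : Fin d) :
    ∑ i ∈ Finset.Iio j, (g (trunc ((i : ℕ) + 1) x) - g (trunc i x)) = g (trunc j x) - g 0 := by
  have h := Finset.sum_map (Finset.Iio j) Fin.valEmbedding
    fun n => g (trunc (n + 1) x) - g (trunc n x)
  rw [Fin.map_valEmbedding_Iio, Nat.Iio_eq_range, Finset.sum_range_sub (fun n => g (trunc n x)),
    trunc_zero] at h
  exact h.symm

lemma sum_trunc_sub : ∑ i : Fin d, (g (trunc ((i : ℕ) + 1) x) - g (trunc i x)) = g x - g 0 := by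
  rw [Fin.sum_univ_eq_sum_range (fun n => g (trunc (n + 1) x) - g (trunc n x)),
    Finset.sum_range_sub (fun n => g (trunc n x)), trunc_eq_self, trunc_zero]

end Telescoping

section Boundary

variable {A : Finset (Fin d → ℕ)} {k n : Fin d → ℕ}

lemma kdown_zero : kdown (0 : Fin d → ℕ) = 0 := by
  funext i
  simp [kdown]

lemma mem_bdry : n ∈ bdry A ↔ n ∉ A ∧ kdown n ∈ A := by
  refine ⟨fun h => (Finset.mem_filter.mp h).2,
    fun ⟨hnA, hdA⟩ => Finset.mem_filter.mpr ⟨?_, hnA, hdA⟩⟩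
  have hn : n ≠ 0 := by
    rintro rfl
    exact hnA (kdown_zero ▸ hdA)
  obtain ⟨m, j, h0, rfl⟩ := exists_eq_add_single hn
  rw [kdown_add_single h0] at hdA
  refine Finset.mem_biUnion.mpr ⟨m, hdA, Finset.mem_image.mpr ⟨j, Finset.mem_univ _, ?_⟩⟩
  funext i
  simp [Pi.single_apply]

lemma filter_bdry_kdown_eq (hk : Maximal (· ∈ A) k) :
    (bdry A).filter (kdown · = k) =
      (Finset.univ.filter fun i => ∀ i' < i, k i' = 0).image fun i => k + Pi.single i 1 := by
  ext n
  simp only [Finset.mem_filter, mem_bdry, Finset.mem_image, Finset.mem_univ, true_and]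
  constructor
  · rintro ⟨⟨hnA, hdA⟩, rfl⟩
    have hn : n ≠ 0 := by
      rintro rfl
      exact hnA (kdown_zero ▸ hdA)
    obtain ⟨i, h0, hn⟩ := (kdown_eq_iff hn).mp rfl
    exact ⟨i, h0, hn.symm⟩
  · rintro ⟨i, h0, rfl⟩
    refine ⟨⟨fun hA => ?_, by rw [kdown_add_single h0]; exact hk.prop⟩, kdown_add_single h0⟩
    simpa using hk.le_of_ge hA (le_add_of_nonneg_right zero_le) i

lemma filter_bdry_kdown_ne (hk : k ∈ A) :
    (bdry A).filter (¬ kdown · = k) = (bdry (A.erase k)).erase k := by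
  ext n
  simp only [Finset.mem_filter, Finset.mem_erase, mem_bdry]
  constructor
  · rintro ⟨⟨hnA, hdA⟩, hdk⟩
    exact ⟨fun h => hnA (h ▸ hk), fun h => hnA h.2, hdk, hdA⟩
  · rintro ⟨hnk, hnA, hdk, hdA⟩
    exact ⟨⟨fun h => hnA ⟨hnk, h⟩, hdA⟩, hdk⟩

lemma sum_bdry_of_maximal (hk : Maximal (· ∈ A) k) (R : (Fin d → ℕ) → ℝ) :
    ∑ n ∈ bdry A, R n =
      ∑ i ∈ Finset.univ.filter (fun i => ∀ i' < i, k i' = 0), R (k + Pi.single i 1) +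
        ∑ n ∈ (bdry (A.erase k)).erase k, R n := by
  rw [← Finset.sum_filter_add_sum_filter_not (bdry A) (kdown · = k), filter_bdry_kdown_eq hk,
    filter_bdry_kdown_ne hk.prop, Finset.sum_image fun i _ i' _ h => ?_]
  simpa [Pi.single_apply] using congrFun (add_left_cancel h) i

end Boundary

section TaylorTerms

noncomputable def taylorMonomial (x : Fin d → ℝ) (k : Fin d → ℕ) : ℝ :=
  (∏ i, x i ^ k i) / ((∏ i, (k i).factorial : ℕ) : ℝ)

noncomputable def taylorTerm (f : (Fin d → ℝ) → ℝ) (x : Fin d → ℝ) (k : Fin d → ℕ) : ℝ :=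
  taylorMonomial x k * mderiv k f 0

noncomputable def remainderTerm (f : (Fin d → ℝ) → ℝ) (x : Fin d → ℝ) (k : Fin d → ℕ) : ℝ :=
  taylorMonomial x (kdown k) *
    ∫ y, deltaK k (mderiv (kdown k) f) (fun i => x i * y i) ∂Qmeas (kdown k)

variable {f : (Fin d → ℝ) → ℝ} {x : Fin d → ℝ} {k : Fin d → ℕ} {j : Fin d}

lemma taylorMonomial_zero : taylorMonomial x 0 = 1 := by
  simp [taylorMonomial]

lemma taylorMonomial_add_single :
    taylorMonomial x (k + Pi.single j 1) = taylorMonomial x k * (x j / (k j + 1)) := by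
  have hpow : ∏ i, x i ^ (k + Pi.single j 1 : Fin d → ℕ) i = (∏ i, x i ^ k i) * x j := by
    rw [← Finset.mul_prod_erase _ _ (Finset.mem_univ j),
      ← Finset.mul_prod_erase _ (fun i => x i ^ k i) (Finset.mem_univ j),
      Finset.prod_congr (g := fun i => x i ^ k i) rfl fun i hi => by
        simp [Finset.ne_of_mem_erase hi]]
    simp [pow_succ]
    ring
  have hfact : ∏ i, ((k + Pi.single j 1 : Fin d → ℕ) i).factorial =
      (∏ i, (k i).factorial) * (k j + 1) := by
    rw [← Finset.mul_prod_erase _ _ (Finset.mem_univ j),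
      ← Finset.mul_prod_erase _ (fun i => (k i).factorial) (Finset.mem_univ j),
      Finset.prod_congr (g := fun i => (k i).factorial) rfl fun i hi => by
        simp [Finset.ne_of_mem_erase hi]]
    simp [Nat.factorial_succ]
    ring
  rw [taylorMonomial, taylorMonomial, hpow, hfact]
  push_cast
  field_simp

lemma remainderTerm_add_single (h0 : ∀ i < j, k i = 0) (hg : Continuous (mderiv k f)) :
    remainderTerm f x (k + Pi.single j 1) = taylorMonomial x k *
      ∫ t, (mderiv k f (truncLine x j t) - mderiv k f (trunc j x)) ∂taylorWeight (k j) := by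
  rw [remainderTerm, kdown_add_single h0]
  congr 1
  refine integral_Qmeas h0 ((hg.comp continuous_truncLine).sub continuous_const) fun y hy => ?_
  rw [deltaK, mPos_add_single h0, trunc_succ_mul_eq hy, trunc_mul_eq hy]
  rfl

lemma remainderTerm_add_single_of_eq_zero (h0 : ∀ i < j, k i = 0) (hkj : k j = 0)
    (hg : Continuous (mderiv k f)) :
    remainderTerm f x (k + Pi.single j 1) =
      taylorMonomial x k * (mderiv k f (trunc ((j : ℕ) + 1) x) - mderiv k f (trunc j x)) := by
  rw [remainderTerm_add_single h0 hg, hkj, taylorWeight_zero, integral_dirac, truncLine_one]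

lemma remainderTerm_add_single_eq_integral (h0 : ∀ i < j, k i = 0)
    (hg : Differentiable ℝ (mderiv k f)) (hg' : Continuous (mderiv (k + Pi.single j 1) f)) :
    remainderTerm f x (k + Pi.single j 1) = taylorMonomial x (k + Pi.single j 1) *
      ∫ t, mderiv (k + Pi.single j 1) f (truncLine x j t) ∂taylorWeight (k j + 1) := by
  have hparts := mul_integral_taylorWeight_sub (l := k j)
    (φ := fun t => mderiv k f (truncLine x j t))
    (φ' := fun t => x j * mderiv (k + Pi.single j 1) f (truncLine x j t))
    (fun t => mderiv_add_single h0 ▸ hasDerivAt_comp_truncLine hg t)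
    (continuous_const.mul (hg'.comp continuous_truncLine))
  rw [truncLine_zero, integral_const_mul] at hparts
  rw [remainderTerm_add_single h0 hg.continuous, taylorMonomial_add_single]
  field_simp
  linear_combination taylorMonomial x k * hparts

end TaylorTerms

section Expansion

variable {f : (Fin d → ℝ) → ℝ} {x : Fin d → ℝ}

lemma remainderTerm_eq_taylorTerm_add_sum {m : Fin d → ℕ} {j : Fin d} (h0 : ∀ i < j, m i = 0)
    (hm : Differentiable ℝ (mderiv m f)) (hk : Differentiable ℝ (mderiv (m + Pi.single j 1) f)) :
    remainderTerm f x (m + Pi.single j 1) = taylorTerm f x (m + Pi.single j 1) +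
      ∑ i ∈ Finset.Iic j, remainderTerm f x (m + Pi.single j 1 + Pi.single i 1) := by
  set k := m + Pi.single j 1 with hk_def
  set g := mderiv k f
  have hk0 : ∀ i < j, k i = 0 := fun i hi => by simp [hk_def, h0 i hi, hi.ne]
  have hkj : k j = m j + 1 := by simp [hk_def]
  have hlow : ∀ i ∈ Finset.Iio j, remainderTerm f x (k + Pi.single i 1) =
      taylorMonomial x k * (g (trunc ((i : ℕ) + 1) x) - g (trunc i x)) := fun i hi =>
    remainderTerm_add_single_of_eq_zero (fun i' hi' => hk0 i' (hi'.trans (Finset.mem_Iio.mp hi)))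
      (hk0 i (Finset.mem_Iio.mp hi)) hk.continuous
  have hself : remainderTerm f x (k + Pi.single j 1) =
      taylorMonomial x k * ((∫ t, g (truncLine x j t) ∂taylorWeight (k j)) - g (trunc j x)) := by
    rw [remainderTerm_add_single hk0 hk.continuous, integral_sub (f := fun t => g (truncLine x j t))
      (integrable_taylorWeight (hk.continuous.comp continuous_truncLine))
      (integrable_const _), integral_const, probReal_univ, one_smul]
  rw [← Finset.Iio_insert, Finset.sum_insert Finset.notMem_Iio_self, Finset.sum_congr rfl hlow,
    ← Finset.mul_sum, sum_Iio_trunc_sub, hself, remainderTerm_add_single_eq_integral h0 hm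
    hk.continuous, ← hkj, taylorTerm]
  ring

lemma sum_bdry_singleton_zero (hf : Continuous f) :
    ∑ n ∈ bdry {0}, remainderTerm f x n = f x - f 0 := by
  have hmax : Maximal (· ∈ ({0} : Finset (Fin d → ℕ))) 0 :=
    ⟨Finset.mem_singleton_self 0, fun n hn _ => (Finset.mem_singleton.mp hn).le⟩
  have hf0 : Continuous (mderiv 0 f) := by rwa [mderiv_zero]
  have hempty : bdry (∅ : Finset (Fin d → ℕ)) = ∅ := by simp [bdry]
  rw [sum_bdry_of_maximal hmax, Finset.erase_singleton, hempty, Finset.erase_empty,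
    Finset.sum_empty, add_zero, Finset.filter_true_of_mem fun i _ i' _ => rfl,
    Finset.sum_congr rfl fun i _ =>
      remainderTerm_add_single_of_eq_zero (k := 0) (fun _ _ => rfl) rfl hf0, ← Finset.mul_sum,
    taylorMonomial_zero, one_mul, mderiv_zero, sum_trunc_sub]

theorem eq_sum_taylorTerm_add_sum_remainderTerm {A : Finset (Fin d → ℕ)} (hA : A.Nonempty)
    (hAdc : IsLowerSet (A : Set (Fin d → ℕ))) (hf : ∀ k ∈ A, Differentiable ℝ (mderiv k f)) :
    f x = ∑ k ∈ A, taylorTerm f x k + ∑ k ∈ bdry A, remainderTerm f x k := by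
  induction A using Finset.strongInduction with
  | H A ih =>
  obtain ⟨k, hk⟩ := A.exists_maximal hA
  rcases eq_or_ne k 0 with rfl | hk0
  · obtain rfl : A = {0} := Finset.eq_singleton_iff_unique_mem.mpr
      ⟨hk.prop, fun n hn => le_antisymm (hk.le_of_ge hn zero_le) zero_le⟩
    have hf0 : Continuous f :=
      mderiv_zero (f := f) ▸ (hf 0 (Finset.mem_singleton_self 0)).continuous
    rw [Finset.sum_singleton, sum_bdry_singleton_zero hf0, taylorTerm, taylorMonomial_zero,
      mderiv_zero]
    ring
  obtain ⟨m, j, h0, rfl⟩ := exists_eq_add_single hk0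
  set k := m + Pi.single j 1
  have hmk : m ≤ k := le_add_of_nonneg_right zero_le
  have hmA : m ∈ A.erase k := Finset.mem_erase.mpr ⟨fun h => by simpa [k] using congrFun h j,
    hAdc hmk hk.prop⟩
  have hkbdry : k ∈ bdry (A.erase k) :=
    mem_bdry.mpr ⟨Finset.notMem_erase k A, by rwa [kdown_add_single h0]⟩
  have hAdc' : IsLowerSet (A.erase k : Set (Fin d → ℕ)) := by
    rw [Finset.coe_erase]
    exact hAdc.erase fun n hn hkn => le_antisymm (hk.le_of_ge hn hkn) hkn
  rw [ih _ (Finset.erase_ssubset hk.prop) ⟨m, hmA⟩ hAdc'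
      fun n hn => hf n (Finset.mem_of_mem_erase hn),
    ← Finset.add_sum_erase _ _ hkbdry, ← Finset.add_sum_erase _ _ hk.prop,
    sum_bdry_of_maximal hk, filter_forall_lt_add_single_eq_zero h0,
    remainderTerm_eq_taylorTerm_add_sum h0 (hf m (Finset.mem_of_mem_erase hmA)) (hf k hk.prop)]
  ring

end Expansion

theorem anisotropic_taylor_general (d : ℕ) (s : Fin d → ℝ)
    (r : ℝ)
    (A : Finset (Fin d → ℕ)) (hA : A.Nonempty)
    (hAdeg : ∀ k ∈ A, sdeg s k < r)
    (hAdc : ∀ k ∈ A, ∀ l : Fin d → ℕ, l ≤ k → l ∈ A)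
    (f : (Fin d → ℝ) → ℝ)
    (hfd : ∀ k : Fin d → ℕ, sdeg s k < r → Differentiable ℝ (mderiv k f)) :
    ∀ x : Fin d → ℝ,
      f x =
        (∑ k ∈ A, (((∏ i, (k i).factorial : ℕ) : ℝ))⁻¹ * mderiv k f 0 * ∏ i, x i ^ k i) +
          ∑ k ∈ bdry A,
            ((∏ i, x i ^ kdown k i) / ((∏ i, (kdown k i).factorial : ℕ) : ℝ)) *
              ∫ y : Fin d → ℝ,
                deltaK k (mderiv (kdown k) f) (fun i => x i * y i) ∂ Qmeas (kdown k) := by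
  intro x
  refine (eq_sum_taylorTerm_add_sum_remainderTerm hA (fun k l hlk hk => hAdc k hk l hlk)
    fun k hk => hfd k (hAdeg k hk)).trans ?_
  congr 1
  exact Finset.sum_congr rfl fun k _ => by rw [taylorTerm, taylorMonomial]; ring

/-- Anisotropic Taylor formula with increment-form remainder.
Let `A ⊆ {k : |k|_s < r}` be a nonempty downward-closed set of multi-indices and let `f`
have continuous partial derivatives `∂^k` for all `|k|_s ≤ r`.  Then
`f(x) = Σ_{k∈A} ∂^k f(0) x^k / k!
  + Σ_{k∈∂A} (x^{k↓}/k↓!) ∫ δ_k[∂^{k↓}f]((xᵢyᵢ)ᵢ) Q^{k↓}(dy)`. -/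
theorem anisotropic_taylor (d : ℕ) (hd : 1 ≤ d) (s : Fin d → ℝ) (hs : ∀ i, 0 < s i)
    (r : ℝ) (hr : 0 < r)
    (A : Finset (Fin d → ℕ)) (hA : A.Nonempty)
    (hAdeg : ∀ k ∈ A, sdeg s k < r)
    (hAdc : ∀ k ∈ A, ∀ l : Fin d → ℕ, l ≤ k → l ∈ A)
    (f : (Fin d → ℝ) → ℝ)
    (hfc : ∀ k : Fin d → ℕ, sdeg s k ≤ r → Continuous (mderiv k f))
    (hfd : ∀ k : Fin d → ℕ, sdeg s k < r → Differentiable ℝ (mderiv k f)) :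
    ∀ x : Fin d → ℝ,
      f x =
        (∑ k ∈ A, (((∏ i, (k i).factorial : ℕ) : ℝ))⁻¹ * mderiv k f 0 * ∏ i, x i ^ k i) +
          ∑ k ∈ bdry A,
            ((∏ i, x i ^ kdown k i) / ((∏ i, (kdown k i).factorial : ℕ) : ℝ)) *
              ∫ y : Fin d → ℝ,
                deltaK k (mderiv (kdown k) f) (fun i => x i * y i) ∂ Qmeas (kdown k) :=
  anisotropic_taylor_general d s r A hA hAdeg hAdc f hfd

end AnisoTaylor
end
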